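/- The regularized density Φ_ε is nonnegative and continuous on [0,∞)², and it is bounded uniformly in ε: there is a constant M > 0 depending only on ψ such that 0 ≤ Φ_ε(y,z) ≤ M for all (y,z) ∈ [0,∞)² and all ε ∈ (0,1]. Moreover, for every z ≥ 0 the function y ↦ Φ_ε(y,z) is nondecreasing, Lipschitz continuous and of class C¹ on [0,∞), with 0 ≤ ∂_yΦ_ε(y,z) ≤ ψ'(0) for all y,z ≥ 0 and ∂_yΦ_ε(0,z) = 0 for all z ≥ 0. -/

import Mathlib

set_option autoImplicit false

open Set Filter Topology

/-!
Gluing the parabola `z² / (2ε)` to `ψ` at the fixed point `z_ε` of `s ↦ ε ψ'(s)` makes `ψ_ε` a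
`C¹` function with `ψ_ε'(z) = z / ε` on `[0, z_ε]` and `ψ'(z)` beyond, so `0 ≤ ψ_ε' ≤ ψ'(0)`,
`ψ_ε'(0) = 0`, and concavity of `ψ` gives `z ψ_ε'(z) / 2 ≤ ψ_ε(z)`. For `y < z`, `Φ_ε(·, z)` is
the even parabola matching `ψ_ε` in value and slope at `y = z`, so `∂_yΦ_ε(y, z)` is
`ψ_ε'(z) y / z` there and `ψ_ε'(y)` for `y ≥ z`; this gives monotonicity, the Lipschitz bound and
`∂_yΦ_ε(0, z) = 0`. Finally `ψ_ε(max y z) - z ψ_ε'(z) / 2 ≤ Φ_ε(y, z) ≤ ψ_ε(max y z)`: the lower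
bound gives nonnegativity and, with the upper one, continuity on the line `z = 0`; the upper bound
and `ψ_ε ≤ sup ψ - ψ(0) + ε ψ'(0)² / 2` give the uniform bound.
-/

theorem continuous_ite_lt {α β : Type*} [TopologicalSpace α] [LinearOrder α]
    [OrderClosedTopology α] [TopologicalSpace β] {f g : α → β} {a : α}
    (hf : ContinuousOn f (Iic a)) (hg : ContinuousOn g (Ici a)) (hfg : f a = g a) :
    Continuous fun t => if t < a then f t else g t := by
  simp_rw [← not_le, ite_not]
  exact continuous_if_le continuous_const continuous_id hg hf fun t ht => ht ▸ hfg.symm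

theorem hasDerivWithinAt_ite_lt {E : Type*} [NormedAddCommGroup E] [NormedSpace ℝ E]
    {f g f' g' : ℝ → E} {s : Set ℝ} {a x : ℝ}
    (hf : ∀ t ∈ s, t ≤ a → HasDerivWithinAt f (f' t) s t)
    (hg : ∀ t ∈ s, a ≤ t → HasDerivWithinAt g (g' t) s t)
    (hfg : f a = g a) (hfg' : f' a = g' a) (hx : x ∈ s) :
    HasDerivWithinAt (fun t => if t < a then f t else g t) (if x < a then f' x else g' x) s x := by
  rcases lt_trichotomy x a with hxa | rfl | hax
  · rw [if_pos hxa]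
    refine (hf x hx hxa.le).congr_of_eventuallyEq ?_ (if_pos hxa)
    filter_upwards [nhdsWithin_le_nhds (eventually_lt_nhds hxa)] with t ht using if_pos ht
  · have hs : s = s ∩ Iic x ∪ s ∩ Ici x := by
      rw [← inter_union_distrib_left, Iic_union_Ici, inter_univ]
    rw [if_neg (lt_irrefl x), hs, ← hfg']
    refine HasDerivWithinAt.union ?_ ?_
    · refine ((hf x hx le_rfl).mono inter_subset_left).congr (fun t ht => ?_) (by simp [hfg])
      rcases (mem_Iic.1 ht.2).lt_or_eq with htx | rfl
      · exact if_pos htx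
      · simp [hfg]
    · rw [hfg']
      exact ((hg x hx le_rfl).mono inter_subset_left).congr
        (fun t ht => if_neg (not_lt.2 ht.2)) (if_neg (lt_irrefl x))
  · rw [if_neg (not_lt.2 hax.le)]
    refine (hg x hx hax.le).congr_of_eventuallyEq ?_ (if_neg (not_lt.2 hax.le))
    filter_upwards [nhdsWithin_le_nhds (eventually_gt_nhds hax)] with t ht
      using if_neg (not_lt.2 ht.le)

theorem HasDerivWithinAt.nonneg_of_monotoneOn_Ici {f : ℝ → ℝ} {a x f' : ℝ} (hx : a ≤ x)
    (hd : HasDerivWithinAt f f' (Ici a) x) (hf : MonotoneOn f (Ici a)) : 0 ≤ f' :=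
  hd.nonneg_of_monotoneOn (accPt_principal_iff_nhdsWithin.2 <| (nhdsGT_neBot x).mono <|
    nhdsWithin_mono _ fun _ ht => ⟨hx.trans (le_of_lt ht), ne_of_gt ht⟩) hf

theorem ConcaveOn.antitoneOn_of_hasDerivWithinAt {S : Set ℝ} {f f' : ℝ → ℝ}
    (hfc : ConcaveOn ℝ S f) (hf : ∀ x ∈ S, HasDerivWithinAt f (f' x) S x) : AntitoneOn f' S := by
  intro x hx y hy hxy
  rcases hxy.eq_or_lt with rfl | hxy
  · rfl
  exact (hfc.le_slope_of_hasDerivWithinAt hx hy hxy (hf y hy)).trans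
    (hfc.slope_le_of_hasDerivWithinAt hx hy hxy (hf x hx))

theorem Convex.monotoneOn_of_hasDerivWithinAt_nonneg {D : Set ℝ} {f f' : ℝ → ℝ}
    (hD : Convex ℝ D) (hf : ∀ x ∈ D, HasDerivWithinAt f (f' x) D x) (hf' : ∀ x ∈ D, 0 ≤ f' x) :
    MonotoneOn f D :=
  _root_.monotoneOn_of_hasDerivWithinAt_nonneg hD (fun x hx => (hf x hx).continuousWithinAt)
    (fun x hx => (hf x (interior_subset hx)).mono interior_subset)
    (fun x hx => hf' x (interior_subset hx))

theorem Convex.lipschitzOnWith_of_hasDerivWithinAt_abs_le {D : Set ℝ} {f f' : ℝ → ℝ} {L : ℝ}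
    (hD : Convex ℝ D) (hf : ∀ x ∈ D, HasDerivWithinAt f (f' x) D x) (hf' : ∀ x ∈ D, |f' x| ≤ L) :
    LipschitzOnWith L.toNNReal f D :=
  hD.lipschitzOnWith_of_nnnorm_hasDerivWithin_le hf fun x hx => by
    rw [← NNReal.coe_le_coe, coe_nnnorm, Real.norm_eq_abs]
    exact (hf' x hx).trans (Real.le_coe_toNNReal L)

-- `c` stands for the fixed point `z_ε`; the two pieces glue to a `C¹` function iff `ψd c = c / ε`.
noncomputable def regPotential (ψ : ℝ → ℝ) (ε c z : ℝ) : ℝ :=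
  if z ≤ c then z ^ 2 / (2 * ε) else ψ z - ψ c + c ^ 2 / (2 * ε)

noncomputable def regPotentialDeriv (ψd : ℝ → ℝ) (ε c z : ℝ) : ℝ :=
  if z < c then z / ε else ψd z

structure IsAdmissiblePotential (F F' : ℝ → ℝ) (L : ℝ) : Prop where
  hasDerivWithinAt : ∀ z ∈ Ici (0:ℝ), HasDerivWithinAt F (F' z) (Ici 0) z
  continuousOn_deriv : ContinuousOn F' (Ici 0)
  deriv_mem_Icc : ∀ z ∈ Ici (0:ℝ), F' z ∈ Icc 0 L
  deriv_zero : F' 0 = 0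
  mul_deriv_le : ∀ z ∈ Ici (0:ℝ), z * F' z / 2 ≤ F z

section RegPotential

variable {ψ ψd : ℝ → ℝ} {ε c : ℝ}

theorem hasDerivWithinAt_regPotential
    (hψ : ∀ z ∈ Ici (0:ℝ), HasDerivWithinAt ψ (ψd z) (Ici 0) z)
    (hfix : ψd c = c / ε) {z : ℝ} (hz : 0 ≤ z) :
    HasDerivWithinAt (regPotential ψ ε c) (regPotentialDeriv ψd ε c z) (Ici 0) z := by
  have hglue : regPotential ψ ε c =
      fun t => if t < c then t ^ 2 / (2 * ε) else ψ t - ψ c + c ^ 2 / (2 * ε) := by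
    funext t
    unfold regPotential
    split_ifs with h₁ h₂ h₂
    · rfl
    · rw [le_antisymm h₁ (not_lt.1 h₂)]; ring
    · exact absurd h₂.le h₁
    · rfl
  rw [hglue]
  refine hasDerivWithinAt_ite_lt (f' := (· / ε)) (g' := ψd) (fun t _ _ => ?_)
    (fun t ht _ => ((hψ t ht).sub_const _).add_const _) (by ring) hfix.symm hz
  exact (((hasDerivAt_pow 2 t).div_const (2 * ε)).congr_deriv (by ring)).hasDerivWithinAt

theorem continuous_regPotentialDeriv (hψd : ContinuousOn ψd (Ici 0)) (hc : 0 ≤ c)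
    (hfix : ψd c = c / ε) : Continuous (regPotentialDeriv ψd ε c) :=
  continuous_ite_lt (continuous_id.div_const ε).continuousOn (hψd.mono (Ici_subset_Ici.2 hc))
    hfix.symm

theorem regPotentialDeriv_mem_Icc (hψd : ∀ z ∈ Ici (0:ℝ), 0 ≤ ψd z) (hanti : AntitoneOn ψd (Ici 0))
    (hε : 0 < ε) (hc : 0 ≤ c) (hfix : ψd c = c / ε) {z : ℝ} (hz : 0 ≤ z) :
    regPotentialDeriv ψd ε c z ∈ Icc 0 (ψd 0) := by
  unfold regPotentialDeriv
  split_ifs with hzc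
  · refine ⟨by positivity, ?_⟩
    calc z / ε ≤ c / ε := by gcongr
      _ = ψd c := hfix.symm
      _ ≤ ψd 0 := hanti self_mem_Ici (mem_Ici.2 hc) hc
  · exact ⟨hψd z hz, hanti self_mem_Ici (mem_Ici.2 hz) hz⟩

theorem mul_regPotentialDeriv_le (hconc : ConcaveOn ℝ (Ici 0) ψ)
    (hψ : ∀ z ∈ Ici (0:ℝ), HasDerivWithinAt ψ (ψd z) (Ici 0) z)
    (hψd : ∀ z ∈ Ici (0:ℝ), 0 ≤ ψd z) (hanti : AntitoneOn ψd (Ici 0))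
    (hε : 0 < ε) (hc : 0 ≤ c) (hfix : ψd c = c / ε) {z : ℝ} (hz : 0 ≤ z) :
    z * regPotentialDeriv ψd ε c z / 2 ≤ regPotential ψ ε c z := by
  rcases lt_trichotomy z c with hzc | rfl | hcz
  · rw [regPotentialDeriv, regPotential, if_pos hzc, if_pos hzc.le]
    exact le_of_eq (by field_simp)
  · rw [regPotentialDeriv, regPotential, if_neg (lt_irrefl z), if_pos le_rfl, hfix]
    exact le_of_eq (by field_simp)
  · rw [regPotentialDeriv, regPotential, if_neg (not_lt.2 hcz.le), if_neg (not_le.2 hcz)]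
    have hslope := hconc.le_slope_of_hasDerivWithinAt (mem_Ici.2 hc) (mem_Ici.2 hz) hcz (hψ z hz)
    rw [slope_def_field, le_div_iff₀ (sub_pos.2 hcz)] at hslope
    have hc2 : c ^ 2 / (2 * ε) = c * ψd c / 2 := by
      rw [hfix]
      ring
    nlinarith [mul_nonneg (hψd z hz) (sub_pos.2 hcz).le,
      mul_nonneg hc (sub_nonneg.2 (hanti (mem_Ici.2 hc) (mem_Ici.2 hz) hcz.le))]

theorem regPotential_le {B : ℝ} (hmono : MonotoneOn ψ (Ici 0)) (hB : ∀ z ∈ Ici (0:ℝ), ψ z ≤ B)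
    (hanti : AntitoneOn ψd (Ici 0)) (hε : 0 < ε) (hc : 0 ≤ c) (hfix : ψd c = c / ε)
    {z : ℝ} (hz : 0 ≤ z) : regPotential ψ ε c z ≤ B - ψ 0 + ε * ψd 0 ^ 2 / 2 := by
  have hψ0B : ψ 0 ≤ B := hB 0 self_mem_Ici
  have hc_le : c ≤ ε * ψd 0 := by
    rw [← div_le_iff₀' hε, ← hfix]
    exact hanti self_mem_Ici (mem_Ici.2 hc) hc
  have hc2 : c ^ 2 / (2 * ε) ≤ ε * ψd 0 ^ 2 / 2 := by
    rw [div_le_iff₀ (by positivity)]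
    nlinarith
  unfold regPotential
  split_ifs with hzc
  · have : z ^ 2 / (2 * ε) ≤ c ^ 2 / (2 * ε) := by gcongr
    linarith
  · have := hB z hz
    have := hmono self_mem_Ici (mem_Ici.2 hc) hc
    linarith

theorem isAdmissiblePotential_regPotential (hconc : ConcaveOn ℝ (Ici 0) ψ)
    (hψ : ∀ z ∈ Ici (0:ℝ), HasDerivWithinAt ψ (ψd z) (Ici 0) z)
    (hψd_nonneg : ∀ z ∈ Ici (0:ℝ), 0 ≤ ψd z) (hanti : AntitoneOn ψd (Ici 0))
    (hψd : ContinuousOn ψd (Ici 0)) (hε : 0 < ε) (hc : 0 < c) (hfix : ψd c = c / ε) :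
    IsAdmissiblePotential (regPotential ψ ε c) (regPotentialDeriv ψd ε c) (ψd 0) where
  hasDerivWithinAt _ hz := hasDerivWithinAt_regPotential hψ hfix hz
  continuousOn_deriv := (continuous_regPotentialDeriv hψd hc.le hfix).continuousOn
  deriv_mem_Icc _ hz := regPotentialDeriv_mem_Icc hψd_nonneg hanti hε hc.le hfix hz
  deriv_zero := by simp [regPotentialDeriv, hc]
  mul_deriv_le _ hz := mul_regPotentialDeriv_le hconc hψ hψd_nonneg hanti hε hc.le hfix hz

end RegPotential

noncomputable def regDensity (F F' : ℝ → ℝ) (y z : ℝ) : ℝ :=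
  if y < z then F' z / (2 * z) * y ^ 2 + F z - z * F' z / 2 else F y

noncomputable def regDensityDeriv (F' : ℝ → ℝ) (z y : ℝ) : ℝ :=
  if y < z then F' z * y / z else F' y

section RegDensity

variable {F F' : ℝ → ℝ} {L y z : ℝ}

theorem regDensity_eq_max_add_min (F F' : ℝ → ℝ) (y z : ℝ) :
    regDensity F F' y z = F (max y z) + F' z * (min y z ^ 2 - z ^ 2) / (2 * z) := by
  unfold regDensity
  split_ifs with h
  · rw [max_eq_right h.le, min_eq_left h.le]
    rcases eq_or_ne z 0 with rfl | hz
    · simp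
    · field_simp
      ring
  · rw [max_eq_left (not_lt.1 h), min_eq_right (not_lt.1 h)]
    simp

theorem regDensity_le_max (hy : 0 ≤ y) (hF' : 0 ≤ F' z) :
    regDensity F F' y z ≤ F (max y z) := by
  unfold regDensity
  split_ifs with h
  · have hz : 0 < z := hy.trans_lt h
    have : F' z / (2 * z) * y ^ 2 ≤ F' z / (2 * z) * z ^ 2 := by gcongr
    rw [max_eq_right h.le]
    field_simp at this ⊢
    linarith
  · rw [max_eq_left (not_lt.1 h)]

theorem sub_le_regDensity (hz : 0 ≤ z) (hF' : 0 ≤ F' z) :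
    F (max y z) - z * F' z / 2 ≤ regDensity F F' y z := by
  unfold regDensity
  split_ifs with h
  · rw [max_eq_right h.le]
    have : 0 ≤ F' z / (2 * z) * y ^ 2 := by positivity
    linarith
  · rw [max_eq_left (not_lt.1 h)]
    have : 0 ≤ z * F' z / 2 := by positivity
    linarith

theorem hasDerivWithinAt_regDensity_left
    (hF : ∀ z ∈ Ici (0:ℝ), HasDerivWithinAt F (F' z) (Ici 0) z) (hz : 0 ≤ z) (hy : 0 ≤ y) :
    HasDerivWithinAt (fun t => regDensity F F' t z) (regDensityDeriv F' z y) (Ici 0) y := by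
  rcases hz.eq_or_lt with rfl | hz
  · have hF0 : ∀ t ∈ Ici (0:ℝ), regDensity F F' t 0 = F t := fun t ht => if_neg (not_lt.2 ht)
    rw [regDensityDeriv, if_neg (not_lt.2 hy)]
    exact (hF y hy).congr hF0 (hF0 y hy)
  refine hasDerivWithinAt_ite_lt (f' := fun t => F' z * t / z) (fun t _ _ => ?_)
    (fun t ht _ => hF t ht) (by field_simp; ring) (by field_simp) hy
  exact ((((hasDerivAt_pow 2 t).const_mul _).add_const _).sub_const _).hasDerivWithinAt.congr_deriv
    (by field_simp; ring)

theorem continuousOn_regDensityDeriv (hF' : ContinuousOn F' (Ici 0)) (hz : 0 ≤ z) :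
    ContinuousOn (regDensityDeriv F' z) (Ici 0) := by
  rcases hz.eq_or_lt with rfl | hz
  · exact hF'.congr fun t ht => if_neg (not_lt.2 ht)
  exact (continuous_ite_lt (f := fun t => F' z * t / z) (by fun_prop)
    (hF'.mono (Ici_subset_Ici.2 hz.le)) (by field_simp)).continuousOn

theorem regDensityDeriv_mem_Icc (hF' : ∀ z ∈ Ici (0:ℝ), F' z ∈ Icc 0 L) (hz : 0 ≤ z) (hy : 0 ≤ y) :
    regDensityDeriv F' z y ∈ Icc 0 L := by
  unfold regDensityDeriv
  split_ifs with hyz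
  · obtain ⟨h0, hL⟩ := hF' z hz
    have hz : 0 < z := hy.trans_lt hyz
    refine ⟨by positivity, ?_⟩
    calc F' z * y / z ≤ F' z * z / z := by gcongr
      _ = F' z := by field_simp
      _ ≤ L := hL
  · exact hF' y hy

theorem regDensityDeriv_zero (hF' : F' 0 = 0) (z : ℝ) : regDensityDeriv F' z 0 = 0 := by
  unfold regDensityDeriv
  split_ifs <;> simp [hF']

namespace IsAdmissiblePotential

theorem congr (h : IsAdmissiblePotential F F' L) {G G' : ℝ → ℝ} (hG : EqOn G F (Ici 0))
    (hG' : ∀ z ∈ Ici (0:ℝ), HasDerivWithinAt G (G' z) (Ici 0) z) :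
    IsAdmissiblePotential G G' L := by
  have hG'F' : EqOn G' F' (Ici 0) := fun z hz => (uniqueDiffOn_Ici 0 z hz).eq_deriv _ (hG' z hz)
    ((h.hasDerivWithinAt z hz).congr (fun x hx => hG hx) (hG hz))
  refine ⟨hG', h.continuousOn_deriv.congr hG'F', fun z hz => hG'F' hz ▸ h.deriv_mem_Icc z hz,
    hG'F' self_mem_Ici ▸ h.deriv_zero, fun z hz => ?_⟩
  rw [hG hz, hG'F' hz]
  exact h.mul_deriv_le z hz

theorem regDensity_nonneg (h : IsAdmissiblePotential F F' L) (hy : 0 ≤ y) (hz : 0 ≤ z) :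
    0 ≤ regDensity F F' y z := by
  rcases lt_or_ge y z with hyz | hzy
  · have := sub_le_regDensity (F := F) (y := y) hz (h.deriv_mem_Icc z hz).1
    rw [max_eq_right hyz.le] at this
    linarith [h.mul_deriv_le z hz]
  · rw [regDensity, if_neg (not_lt.2 hzy)]
    have := h.mul_deriv_le y hy
    have : 0 ≤ y * F' y / 2 := mul_nonneg (mul_nonneg hy (h.deriv_mem_Icc y hy).1) (by norm_num)
    linarith

theorem continuousOn_uncurry_regDensity (h : IsAdmissiblePotential F F' L) :
    ContinuousOn (Function.uncurry (regDensity F F')) (Ici 0 ×ˢ Ici 0) := by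
  have hF : ContinuousOn F (Ici 0) := fun z hz => (h.hasDerivWithinAt z hz).continuousWithinAt
  have hF' : ContinuousOn (fun q : ℝ × ℝ => F' q.2) (Ici 0 ×ˢ Ici 0) :=
    h.continuousOn_deriv.comp continuous_snd.continuousOn fun q hq => hq.2
  have hmax : ContinuousOn (fun q : ℝ × ℝ => F (max q.1 q.2)) (Ici 0 ×ˢ Ici 0) :=
    hF.comp (continuous_fst.max continuous_snd).continuousOn fun q hq =>
      mem_Ici.2 (le_max_of_le_left hq.1)
  rintro ⟨y, z⟩ hp
  have hy : 0 ≤ y := hp.1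
  rcases (mem_Ici.1 hp.2).eq_or_lt with rfl | hz
  · -- at `z = 0` the closed form below has a `0 / 0`; squeeze instead
    have hup : F (max y 0) = regDensity F F' y 0 := by
      rw [regDensity, if_neg (not_lt.2 hy), max_eq_left hy]
    have hcw : ContinuousWithinAt (fun q : ℝ × ℝ => F (max q.1 q.2) - q.2 * F' q.2 / 2)
        (Ici 0 ×ˢ Ici 0) (y, 0) :=
      (hmax _ hp).sub ((continuousWithinAt_snd.mul (hF' _ hp)).div_const 2)
    have hlow : Tendsto (fun q : ℝ × ℝ => F (max q.1 q.2) - q.2 * F' q.2 / 2)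
        (𝓝[Ici 0 ×ˢ Ici 0] (y, 0)) (𝓝 (regDensity F F' y 0)) := by
      convert hcw.tendsto using 2
      rw [← hup]
      ring
    refine tendsto_of_tendsto_of_tendsto_of_le_of_le' hlow (hup ▸ (hmax _ hp).tendsto) ?_ ?_
    · filter_upwards [self_mem_nhdsWithin] with q hq
      exact sub_le_regDensity hq.2 (h.deriv_mem_Icc q.2 hq.2).1
    · filter_upwards [self_mem_nhdsWithin] with q hq
      exact regDensity_le_max hq.1 (h.deriv_mem_Icc q.2 hq.2).1
  · have hform : ContinuousWithinAt
        (fun q : ℝ × ℝ => F (max q.1 q.2) + F' q.2 * (min q.1 q.2 ^ 2 - q.2 ^ 2) / (2 * q.2))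
        (Ici 0 ×ˢ Ici 0) (y, z) :=
      (hmax _ hp).add (((hF' _ hp).mul (((continuous_fst.min continuous_snd).pow 2).sub
        (continuous_snd.pow 2)).continuousWithinAt).div
        (continuous_const.mul continuous_snd).continuousWithinAt (by positivity))
    exact hform.congr (fun q _ => regDensity_eq_max_add_min F F' q.1 q.2)
      (regDensity_eq_max_add_min F F' y z)

end IsAdmissiblePotential

end RegDensity

theorem stmt_15_general (ψ ψd ψdd : ℝ → ℝ)
    (hmono : StrictMonoOn ψ (Ici (0:ℝ)))
    (hbdd : BddAbove (ψ '' Ici (0:ℝ)))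
    (hconc : ConcaveOn ℝ (Ici (0:ℝ)) ψ)
    (hd1 : ∀ z ∈ Ici (0:ℝ), HasDerivWithinAt ψ (ψd z) (Ici (0:ℝ)) z)
    (hd2 : ∀ z ∈ Ici (0:ℝ), HasDerivWithinAt ψd (ψdd z) (Ici (0:ℝ)) z)
    (zfun : ℝ → ℝ)
    (hz : ∀ ε > (0:ℝ), 0 < zfun ε ∧ ε * ψd (zfun ε) = zfun ε ∧
      ∀ z : ℝ, 0 ≤ z → ε * ψd z = z → z = zfun ε)
    (Ψ Ψd : ℝ → ℝ → ℝ)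
    (hΨ : ∀ ε > (0:ℝ), ∀ z ∈ Ici (0:ℝ),
      Ψ ε z = if z ≤ zfun ε then z^2 / (2*ε)
        else ψ z - ψ (zfun ε) + (zfun ε)^2 / (2*ε))
    (hΨd : ∀ ε > (0:ℝ), ∀ z ∈ Ici (0:ℝ), HasDerivWithinAt (Ψ ε) (Ψd ε z) (Ici (0:ℝ)) z)
    (Φε : ℝ → ℝ → ℝ → ℝ)
    (hΦε : ∀ ε > (0:ℝ), ∀ y ∈ Ici (0:ℝ), ∀ z ∈ Ici (0:ℝ),
      Φε ε y z = if y < z then Ψd ε z / (2*z) * y^2 + Ψ ε z - z * Ψd ε z / 2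
        else Ψ ε y) :
    (∀ ε > (0:ℝ), ∀ y ∈ Ici (0:ℝ), ∀ z ∈ Ici (0:ℝ), 0 ≤ Φε ε y z) ∧
    (∀ ε > (0:ℝ), ContinuousOn (Function.uncurry (Φε ε)) (Ici (0:ℝ) ×ˢ Ici (0:ℝ))) ∧
    (∃ M > (0:ℝ), ∀ ε ∈ Ioc (0:ℝ) 1, ∀ y ∈ Ici (0:ℝ), ∀ z ∈ Ici (0:ℝ),
      Φε ε y z ≤ M) ∧
    (∀ ε > (0:ℝ), ∀ z ∈ Ici (0:ℝ),
      MonotoneOn (fun y => Φε ε y z) (Ici (0:ℝ)) ∧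
      (∃ K : NNReal, LipschitzOnWith K (fun y => Φε ε y z) (Ici (0:ℝ))) ∧
      ∃ Φεy : ℝ → ℝ,
        (∀ y ∈ Ici (0:ℝ), HasDerivWithinAt (fun y' => Φε ε y' z) (Φεy y) (Ici (0:ℝ)) y) ∧
        ContinuousOn Φεy (Ici (0:ℝ)) ∧
        (∀ y ∈ Ici (0:ℝ), 0 ≤ Φεy y ∧ Φεy y ≤ ψd 0) ∧
        Φεy 0 = 0) := by
  obtain ⟨B, hB⟩ := hbdd
  have hψd_nonneg : ∀ z ∈ Ici (0:ℝ), 0 ≤ ψd z := fun z hz =>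
    (hd1 z hz).nonneg_of_monotoneOn_Ici hz hmono.monotoneOn
  have hψd_anti : AntitoneOn ψd (Ici 0) := hconc.antitoneOn_of_hasDerivWithinAt hd1
  have hzpos : ∀ ε > (0:ℝ), 0 < zfun ε := fun ε hε => (hz ε hε).1
  have hfix : ∀ ε > (0:ℝ), ψd (zfun ε) = zfun ε / ε := fun ε hε =>
    (eq_div_iff hε.ne').2 ((mul_comm _ _).trans (hz ε hε).2.1)
  have hpot : ∀ ε > (0:ℝ), IsAdmissiblePotential (Ψ ε) (Ψd ε) (ψd 0) := fun ε hε =>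
    (isAdmissiblePotential_regPotential hconc hd1 hψd_nonneg hψd_anti
      (fun z hz => (hd2 z hz).continuousWithinAt) hε (hzpos ε hε) (hfix ε hε)).congr
      (fun z hz => hΨ ε hε z hz) (hΨd ε hε)
  have hΦ : ∀ ε > (0:ℝ), ∀ y ∈ Ici (0:ℝ), ∀ z ∈ Ici (0:ℝ),
      Φε ε y z = regDensity (Ψ ε) (Ψd ε) y z := hΦε
  refine ⟨fun ε hε y hy z hz => hΦ ε hε y hy z hz ▸ (hpot ε hε).regDensity_nonneg hy hz,
    fun ε hε => (hpot ε hε).continuousOn_uncurry_regDensity.congr fun p hp =>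
      hΦ ε hε p.1 hp.1 p.2 hp.2, ⟨B - ψ 0 + ψd 0 ^ 2 / 2, ?_, fun ε hε y hy z hz => ?_⟩,
    fun ε hε z hz => ?_⟩
  · have h1 : (1:ℝ) ∈ Ici 0 := mem_Ici.2 zero_le_one
    linarith [hB (mem_image_of_mem ψ h1), hmono self_mem_Ici h1 one_pos, sq_nonneg (ψd 0)]
  · calc Φε ε y z = regDensity (Ψ ε) (Ψd ε) y z := hΦ ε hε.1 y hy z hz
      _ ≤ Ψ ε (max y z) := regDensity_le_max hy ((hpot ε hε.1).deriv_mem_Icc z hz).1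
      _ = regPotential ψ ε (zfun ε) (max y z) := hΨ ε hε.1 _ (mem_Ici.2 (le_max_of_le_left hy))
      _ ≤ B - ψ 0 + ε * ψd 0 ^ 2 / 2 :=
        regPotential_le hmono.monotoneOn (fun z hz => hB (mem_image_of_mem ψ hz)) hψd_anti hε.1
          (hzpos ε hε.1).le (hfix ε hε.1) (le_max_of_le_left hy)
      _ ≤ B - ψ 0 + ψd 0 ^ 2 / 2 := by
        gcongr
        exact mul_le_of_le_one_left (sq_nonneg _) hε.2
  · have hder : ∀ y ∈ Ici (0:ℝ),
        HasDerivWithinAt (fun t => Φε ε t z) (regDensityDeriv (Ψd ε) z y) (Ici 0) y :=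
      fun y hy => (hasDerivWithinAt_regDensity_left (hpot ε hε).hasDerivWithinAt hz hy).congr
        (fun t ht => hΦ ε hε t ht z hz) (hΦ ε hε y hy z hz)
    have hbd : ∀ y ∈ Ici (0:ℝ), regDensityDeriv (Ψd ε) z y ∈ Icc 0 (ψd 0) := fun y hy =>
      regDensityDeriv_mem_Icc (hpot ε hε).deriv_mem_Icc hz hy
    exact ⟨(convex_Ici 0).monotoneOn_of_hasDerivWithinAt_nonneg hder fun y hy => (hbd y hy).1,
      ⟨_, (convex_Ici 0).lipschitzOnWith_of_hasDerivWithinAt_abs_le hder fun y hy =>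
        (abs_of_nonneg (hbd y hy).1).trans_le (hbd y hy).2⟩,
      _, hder, continuousOn_regDensityDeriv (hpot ε hε).continuousOn_deriv hz, hbd,
      regDensityDeriv_zero (hpot ε hε).deriv_zero z⟩

/-- the regularized density `Φ_ε` is nonnegative and continuous on
`[0,∞)²` and bounded uniformly in `ε ∈ (0,1]`; moreover for every `z ≥ 0` the map
`y ↦ Φ_ε(y,z)` is nondecreasing, Lipschitz and `C¹` with `0 ≤ ∂_yΦ_ε ≤ ψ'(0)` and
`∂_yΦ_ε(0,z) = 0`. -/
theorem stmt_15 (ψ ψd ψdd : ℝ → ℝ) (lam : ℝ) (hlam : 0 < lam)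
    (hψmap : ∀ z ∈ Ici (0:ℝ), 0 ≤ ψ z)
    (hmono : StrictMonoOn ψ (Ici (0:ℝ)))
    (hbdd : BddAbove (ψ '' Ici (0:ℝ)))
    (hconc : ConcaveOn ℝ (Ici (0:ℝ)) ψ)
    (hd1 : ∀ z ∈ Ici (0:ℝ), HasDerivWithinAt ψ (ψd z) (Ici (0:ℝ)) z)
    (hd2 : ∀ z ∈ Ici (0:ℝ), HasDerivWithinAt ψd (ψdd z) (Ici (0:ℝ)) z)
    (hd2cont : ContinuousOn ψdd (Ici (0:ℝ)))
    (hψ0 : ψ 0 = 0) (hψd0 : 0 < ψd 0)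
    (hlow : ∀ z ∈ Ici (0:ℝ), -lam ≤ ψdd z)
    (zfun : ℝ → ℝ)
    (hz : ∀ ε > (0:ℝ), 0 < zfun ε ∧ ε * ψd (zfun ε) = zfun ε ∧
      ∀ z : ℝ, 0 ≤ z → ε * ψd z = z → z = zfun ε)
    (Ψ Ψd : ℝ → ℝ → ℝ)
    (hΨ : ∀ ε > (0:ℝ), ∀ z ∈ Ici (0:ℝ),
      Ψ ε z = if z ≤ zfun ε then z^2 / (2*ε)
        else ψ z - ψ (zfun ε) + (zfun ε)^2 / (2*ε))
    (hΨd : ∀ ε > (0:ℝ), ∀ z ∈ Ici (0:ℝ), HasDerivWithinAt (Ψ ε) (Ψd ε z) (Ici (0:ℝ)) z)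
    (Φε : ℝ → ℝ → ℝ → ℝ)
    (hΦε : ∀ ε > (0:ℝ), ∀ y ∈ Ici (0:ℝ), ∀ z ∈ Ici (0:ℝ),
      Φε ε y z = if y < z then Ψd ε z / (2*z) * y^2 + Ψ ε z - z * Ψd ε z / 2
        else Ψ ε y) :
    (∀ ε > (0:ℝ), ∀ y ∈ Ici (0:ℝ), ∀ z ∈ Ici (0:ℝ), 0 ≤ Φε ε y z) ∧
    (∀ ε > (0:ℝ), ContinuousOn (Function.uncurry (Φε ε)) (Ici (0:ℝ) ×ˢ Ici (0:ℝ))) ∧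
    (∃ M > (0:ℝ), ∀ ε ∈ Ioc (0:ℝ) 1, ∀ y ∈ Ici (0:ℝ), ∀ z ∈ Ici (0:ℝ),
      Φε ε y z ≤ M) ∧
    (∀ ε > (0:ℝ), ∀ z ∈ Ici (0:ℝ),
      MonotoneOn (fun y => Φε ε y z) (Ici (0:ℝ)) ∧
      (∃ K : NNReal, LipschitzOnWith K (fun y => Φε ε y z) (Ici (0:ℝ))) ∧
      ∃ Φεy : ℝ → ℝ,
        (∀ y ∈ Ici (0:ℝ), HasDerivWithinAt (fun y' => Φε ε y' z) (Φεy y) (Ici (0:ℝ)) y) ∧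
        ContinuousOn Φεy (Ici (0:ℝ)) ∧
        (∀ y ∈ Ici (0:ℝ), 0 ≤ Φεy y ∧ Φεy y ≤ ψd 0) ∧
        Φεy 0 = 0) :=
  stmt_15_general ψ ψd ψdd hmono hbdd hconc hd1 hd2 zfun hz Ψ Ψd hΨ hΨd Φε hΦε
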